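/- Let i ∈ {1, …, n} and let S ⊆ 𝒯 be a feasible set with T_i ∉ S such that S ∪ {T_i} is infeasible but (S ∩ 𝒯_{i−1}) ∪ {T_i} is feasible. Then every object of T that is overloaded in S ∪ {T_i} is tight in S and is an object of the subtree T_i, and there exists a set 𝒯′ ⊆ S \ 𝒯_{i−1} with |𝒯′| ≤ leaves(T_i) such that (S ∪ {T_i}) \ 𝒯′ is feasible. -/

import Mathlib

/-!
Setting: `G` is a finite tree rooted at `r`. A family `S : Fin n → Finset V` of
vertex sets of subtrees (connected subgraphs) of `G` is given; since connected
subgraphs of a tree are induced, a subtree is faithfully represented by its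
vertex set. An *object* of the tree is a vertex or an edge. Capacities are
given by `k`, loads count the subtrees containing an object, feasibility means
no object is overloaded. The subtrees are indexed so that their roots appear
in nondecreasing order along some post-order (bottom-up) traversal of the tree,
which is encoded by an injective numbering `pos` of the vertices such that
descendants of any vertex `v` appear (contiguously) before `v`.
-/

open Finset

attribute [local instance] Classical.propDecidable

/-- An *object* of a graph on vertex type `V`: a vertex or a (potential) edge. -/
abbrev Object (V : Type) := V ⊕ Sym2 V

/-- The subtree of `G` with vertex set `s` contains the object `o`. -/
def ContainsObj {V : Type} (G : SimpleGraph V) (s : Finset V) : Object V → Prop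
  | Sum.inl v => v ∈ s
  | Sum.inr e => e ∈ G.edgeSet ∧ ∀ x ∈ e, x ∈ s

/-- The load induced by the subfamily `U` on the object `o`. -/
noncomputable def load {V : Type} {n : ℕ} (G : SimpleGraph V) (S : Fin n → Finset V)
    (U : Finset (Fin n)) (o : Object V) : ℕ :=
  (U.filter fun i => ContainsObj G (S i) o).card

/-- A subfamily of subtrees is feasible if it does not overload any object. -/
def Feasible {V : Type} {n : ℕ} (G : SimpleGraph V) (S : Fin n → Finset V)
    (k : Object V → ℕ) (U : Finset (Fin n)) : Prop :=
  ∀ o : Object V, load G S U o ≤ k o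

/-- The index set `𝒯_i` of the first `i` subtrees. -/
noncomputable def firstIdx (n i : ℕ) : Finset (Fin n) :=
  univ.filter fun j => (j : ℕ) < i

/-- `ALG_i`: the greedy solution after the first `i` subtrees have been considered. -/
noncomputable def greedy {V : Type} {n : ℕ} (G : SimpleGraph V) (S : Fin n → Finset V)
    (k : Object V → ℕ) : ℕ → Finset (Fin n)
  | 0 => ∅
  | m + 1 =>
    if h : m < n then
      if Feasible G S k (insert ⟨m, h⟩ (greedy G S k m)) then
        insert ⟨m, h⟩ (greedy G S k m)
      else greedy G S k m
    else greedy G S k m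

/-- `v` is an ancestor of `u` in the tree `G` rooted at `r`
(i.e. `v` lies on the unique `r`–`u` path). -/
def IsAnc {V : Type} (G : SimpleGraph V) (r v u : V) : Prop :=
  G.dist r u = G.dist r v + G.dist v u

/-- The number of leaves of the subtree with vertex set `s` that differ from its root `rt`. -/
noncomputable def leavesCnt {V : Type} [DecidableEq V] (G : SimpleGraph V)
    (s : Finset V) (rt : V) : ℕ :=
  (s.filter fun v => v ≠ rt ∧ (s.filter fun u => G.Adj v u).card ≤ 1).card

/-!
Every overloaded object `o` lies in `T_i` and in some `T_j` with `j ≥ i`. Such a `T_j` meets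
`T_i`, and as its root does not come before `root(T_i)` in post-order it must contain
`root(T_i)`; being a subtree, it then contains the whole path from `root(T_i)` to any vertex
of `T_i` it meets. Every overloaded object hangs below some leaf `ℓ` of `T_i`, and a single such
`T_j`, chosen to reach the deepest overloaded vertex on the path from `root(T_i)` to `ℓ`,
contains all overloaded objects on that path. Removing one subtree per leaf therefore
relieves every overloaded object, and each of them is overloaded by exactly one.
-/

section Ancestor

variable {V : Type} {G : SimpleGraph V}

lemma isAnc_root (G : SimpleGraph V) (r u : V) : IsAnc G r r u := by
  simp [IsAnc]

lemma isAnc_refl (G : SimpleGraph V) (r u : V) : IsAnc G r u u := by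
  simp [IsAnc]

lemma isAnc_trans (hG : G.Connected) {r x y z : V} (hxy : IsAnc G r x y)
    (hyz : IsAnc G r y z) : IsAnc G r x z := by
  have := hG.dist_triangle (u := x) (v := y) (w := z)
  have := hG.dist_triangle (u := r) (v := x) (w := z)
  unfold IsAnc at *
  omega

lemma isAnc_reroot (hG : G.Connected) {r x y z : V} (hxy : IsAnc G r x y)
    (hyz : IsAnc G r y z) : IsAnc G x y z := by
  have := hG.dist_triangle (u := r) (v := x) (w := z)
  have := hG.dist_triangle (u := x) (v := y) (w := z)
  unfold IsAnc at *
  omega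

lemma eq_of_isAnc_of_dist_le (hG : G.Connected) {r x y : V} (h : IsAnc G r x y)
    (hle : G.dist r y ≤ G.dist r x) : x = y := by
  unfold IsAnc at h
  exact hG.dist_eq_zero_iff.1 (by omega)

lemma SimpleGraph.IsTree.isAnc_or_isAnc_of_adj (hT : G.IsTree) (r : V) {a b : V}
    (hab : G.Adj a b) : IsAnc G r a b ∨ IsAnc G r b a := by
  have hab' : G.dist a b = 1 := dist_eq_one_iff_adj.2 hab
  have hba' : G.dist b a = 1 := dist_eq_one_iff_adj.2 hab.symm
  unfold IsAnc
  rcases hT.dist_eq_dist_add_one_of_adj r hab with h | h <;> omega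

lemma SimpleGraph.IsTree.length_eq_dist_of_isPath (hT : G.IsTree) {u v : V} {p : G.Walk u v}
    (hp : p.IsPath) : p.length = G.dist u v := by
  obtain ⟨q, hq, hql⟩ := hT.connected.exists_path_of_dist u v
  have := hT.isAcyclic.subsingleton_path u v
  have hpq : p = q :=
    congrArg Subtype.val (Subsingleton.elim (α := G.Path u v) ⟨p, hp⟩ ⟨q, hq⟩)
  rw [hpq, hql]

lemma SimpleGraph.IsTree.isAnc_iff_mem_support (hT : G.IsTree) {u v x : V} {p : G.Walk u v}
    (hp : p.IsPath) : IsAnc G u x v ↔ x ∈ p.support := by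
  constructor
  · intro hx
    obtain ⟨q₁, -, hl₁⟩ := hT.connected.exists_path_of_dist u x
    obtain ⟨q₂, -, hl₂⟩ := hT.connected.exists_path_of_dist x v
    have hlen : (q₁.append q₂).length = G.dist u v := by
      rw [Walk.length_append, hl₁, hl₂, hx]
    have := hT.isAcyclic.subsingleton_path u v
    have hq : q₁.append q₂ = p := congrArg Subtype.val (Subsingleton.elim (α := G.Path u v)
      ⟨_, (q₁.append q₂).isPath_of_length_eq_dist hlen⟩ ⟨p, hp⟩)
    rw [← hq, Walk.mem_support_append_iff]
    exact Or.inl q₁.end_mem_support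
  · intro hx
    have h₁ : G.dist u x ≤ (p.takeUntil x hx).length := G.dist_le _
    have h₂ : G.dist x v ≤ (p.dropUntil x hx).length := G.dist_le _
    have h₃ : (p.takeUntil x hx).length + (p.dropUntil x hx).length = p.length := by
      rw [← Walk.length_append, Walk.take_spec]
    have := hT.length_eq_dist_of_isPath hp
    have := hT.connected.dist_triangle (u := u) (v := x) (w := v)
    unfold IsAnc
    omega

/-- In a tree the ancestors of a vertex form a chain. -/
lemma SimpleGraph.IsTree.isAnc_of_dist_le (hT : G.IsTree) {r v x y : V}
    (hx : IsAnc G r x v) (hy : IsAnc G r y v) (hle : G.dist r x ≤ G.dist r y) :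
    IsAnc G r x y := by
  obtain ⟨p, hp, -⟩ := hT.connected.exists_path_of_dist r v
  have hy' : y ∈ p.support := (hT.isAnc_iff_mem_support hp).1 hy
  have hx' : x ∈ ((p.takeUntil y hy').append (p.dropUntil y hy')).support := by
    rw [Walk.take_spec]
    exact (hT.isAnc_iff_mem_support hp).1 hx
  rcases (Walk.mem_support_append_iff _ _).1 hx' with hx'' | hx''
  · exact (hT.isAnc_iff_mem_support (hp.takeUntil hy')).2 hx''
  · have hyxv : IsAnc G y x v := (hT.isAnc_iff_mem_support (hp.dropUntil hy')).2 hx''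
    have := hT.connected.dist_triangle (u := r) (v := x) (w := v)
    have hxy : y = x := hT.connected.dist_eq_zero_iff.1 (by unfold IsAnc at *; omega)
    exact hxy ▸ isAnc_refl G r y

lemma forall_of_induce_preconnected {s : Set V} (hs : (G.induce s).Preconnected) {P : V → Prop}
    {u v : V} (hu : u ∈ s) (hv : v ∈ s) (hPu : P u)
    (hstep : ∀ x y, x ∈ s → y ∈ s → G.Adj x y → P x → P y) : P v := by
  suffices ∀ (a b : s) (w : (G.induce s).Walk a b), P a → P b from
    this ⟨u, hu⟩ ⟨v, hv⟩ (hs ⟨u, hu⟩ ⟨v, hv⟩).some hPu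
  intro a b w
  induction w with
  | nil => exact id
  | cons hadj _ ih => exact fun ha => ih (hstep _ _ (Subtype.prop _) (Subtype.prop _) hadj ha)

/-- Subtrees of a tree are convex. -/
lemma SimpleGraph.IsTree.mem_of_isAnc (hT : G.IsTree) {s : Set V} (hs : (G.induce s).Connected)
    {u v x : V} (hu : u ∈ s) (hv : v ∈ s) (hx : IsAnc G u x v) : x ∈ s := by
  refine forall_of_induce_preconnected (P := fun v => ∀ x, IsAnc G u x v → x ∈ s)
    hs.preconnected hu hv
    (fun x hx => eq_of_isAnc_of_dist_le hT.connected hx (by simp) ▸ hu) ?_ x hx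
  intro a b _ hb hab ha z hz
  rcases hT.isAnc_or_isAnc_of_adj u hab with hab' | hba
  · by_cases hle : G.dist u z ≤ G.dist u a
    · exact ha z (hT.isAnc_of_dist_le hz hab' hle)
    · have : G.dist u b ≤ G.dist u z := by
        have : G.dist a b = 1 := dist_eq_one_iff_adj.2 hab
        unfold IsAnc at hab'
        omega
      exact eq_of_isAnc_of_dist_le hT.connected hz this ▸ hb
  · exact ha z (isAnc_trans hT.connected hz hba)

lemma SimpleGraph.IsTree.isAnc_of_forall_dist_le (hT : G.IsTree) {s : Set V}
    (hs : (G.induce s).Connected) {r c v : V} (hc : c ∈ s)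
    (hmin : ∀ w ∈ s, G.dist r c ≤ G.dist r w) (hv : v ∈ s) : IsAnc G r c v := by
  refine forall_of_induce_preconnected hs.preconnected hc hv (isAnc_refl G r c) ?_
  intro a b _ hb hab ha
  rcases hT.isAnc_or_isAnc_of_adj r hab with hab' | hba
  · exact isAnc_trans hT.connected ha hab'
  · exact hT.isAnc_of_dist_le ha hba (hmin b hb)

end Ancestor

section Leaves

variable {V : Type} [DecidableEq V] {G : SimpleGraph V}

noncomputable def leafSet (G : SimpleGraph V) (s : Finset V) (c : V) : Finset V :=
  s.filter fun v => v ≠ c ∧ (s.filter fun u => G.Adj v u).card ≤ 1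

lemma leavesCnt_eq_card_leafSet (G : SimpleGraph V) (s : Finset V) (c : V) :
    leavesCnt G s c = (leafSet G s c).card :=
  rfl

/-- A vertex of `s` farthest from `c` among the descendants of `x` is a leaf below `x`. -/
lemma SimpleGraph.IsTree.exists_mem_leafSet_isAnc (hT : G.IsTree) {s : Finset V} {c x : V}
    (hne : (leafSet G s c).Nonempty) (hx : x ∈ s) :
    ∃ ℓ ∈ leafSet G s c, IsAnc G c x ℓ := by
  by_cases hxc : x = c
  · obtain ⟨ℓ, hℓ⟩ := hne
    exact ⟨ℓ, hℓ, hxc ▸ isAnc_root G x ℓ⟩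
  obtain ⟨ℓ, hℓD, hmax⟩ := (s.filter (IsAnc G c x)).exists_max_image (G.dist c)
    ⟨x, mem_filter.2 ⟨hx, isAnc_refl G c x⟩⟩
  obtain ⟨hℓs, hxℓ⟩ := mem_filter.1 hℓD
  have hℓc : ℓ ≠ c := by
    rintro rfl
    exact hxc (eq_of_isAnc_of_dist_le hT.connected hxℓ (by simp))
  have hnbr : ∀ z ∈ s, G.Adj ℓ z → IsAnc G c z ℓ ∧ G.dist c z + 1 = G.dist c ℓ := by
    intro z hz hℓz
    have h1 : G.dist z ℓ = 1 := dist_eq_one_iff_adj.2 hℓz.symm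
    rcases hT.isAnc_or_isAnc_of_adj c hℓz with hℓz' | hzℓ
    · have := hmax z (mem_filter.2 ⟨hz, isAnc_trans hT.connected hxℓ hℓz'⟩)
      have : G.dist ℓ z = 1 := dist_eq_one_iff_adj.2 hℓz
      unfold IsAnc at hℓz'
      omega
    · exact ⟨hzℓ, by unfold IsAnc at hzℓ; omega⟩
  refine ⟨ℓ, mem_filter.2 ⟨hℓs, hℓc, card_le_one.2 fun u hu w hw => ?_⟩, hxℓ⟩
  obtain ⟨hu, hℓu⟩ := mem_filter.1 hu
  obtain ⟨hw, hℓw⟩ := mem_filter.1 hw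
  obtain ⟨huℓ, hdu⟩ := hnbr u hu hℓu
  obtain ⟨hwℓ, hdw⟩ := hnbr w hw hℓw
  exact eq_of_isAnc_of_dist_le hT.connected (hT.isAnc_of_dist_le huℓ hwℓ (by omega)) (by omega)

end Leaves

section Objects

variable {V : Type} {G : SimpleGraph V}

def Object.verts : Object V → Set V
  | Sum.inl v => {v}
  | Sum.inr e => {x | x ∈ e}

lemma Object.verts_nonempty (o : Object V) : (Object.verts o).Nonempty := by
  cases o with
  | inl v => exact ⟨v, rfl⟩
  | inr e => exact ⟨_, Sym2.out_fst_mem e⟩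

lemma ContainsObj.verts_subset {s : Finset V} {o : Object V} (h : ContainsObj G s o) :
    Object.verts o ⊆ s := by
  cases o with
  | inl v => exact Set.singleton_subset_iff.2 h
  | inr e => exact h.2

lemma ContainsObj.of_verts_subset {s t : Finset V} {o : Object V} (h : ContainsObj G s o)
    (ht : Object.verts o ⊆ t) : ContainsObj G t o := by
  cases o with
  | inl v => exact ht rfl
  | inr e => exact ⟨h.1, ht⟩

lemma SimpleGraph.IsTree.exists_deepest_vert (hT : G.IsTree) (c : V) {s : Finset V}
    {o : Object V} (h : ContainsObj G s o) :
    ∃ y ∈ Object.verts o, ∀ x ∈ Object.verts o, IsAnc G c x y := by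
  cases o with
  | inl v => exact ⟨v, rfl, fun x hx => hx ▸ isAnc_refl G c x⟩
  | inr e =>
    induction e using Sym2.ind with
    | _ a b =>
    have hmem : ∀ x, x ∈ Object.verts (Sum.inr s(a, b) : Object V) ↔ x = a ∨ x = b :=
      fun x => Sym2.mem_iff
    rcases hT.isAnc_or_isAnc_of_adj c (show G.Adj a b from h.1) with hab | hba
    · refine ⟨b, (hmem b).2 (Or.inr rfl), fun x hx => ?_⟩
      rcases (hmem x).1 hx with rfl | rfl
      exacts [hab, isAnc_refl G c x]
    · refine ⟨a, (hmem a).2 (Or.inl rfl), fun x hx => ?_⟩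
      rcases (hmem x).1 hx with rfl | rfl
      exacts [isAnc_refl G c x, hba]

end Objects

section Load

variable {V : Type} {n : ℕ} {G : SimpleGraph V} {S : Fin n → Finset V} {k : Object V → ℕ}

lemma load_insert {U : Finset (Fin n)} {j : Fin n} (hj : j ∉ U) (o : Object V) :
    load G S (insert j U) o = load G S U o + if ContainsObj G (S j) o then 1 else 0 := by
  unfold load
  rw [filter_insert]
  split_ifs
  · exact card_insert_of_notMem fun h => hj (mem_filter.1 h).1
  · rfl

lemma tight_and_containsObj_of_overloaded {U : Finset (Fin n)} {j : Fin n} {o : Object V}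
    (hU : Feasible G S k U) (hj : j ∉ U) (ho : k o < load G S (insert j U) o) :
    load G S U o = k o ∧ ContainsObj G (S j) o := by
  have := hU o
  rw [load_insert hj] at ho
  split_ifs at ho with hc
  · exact ⟨by omega, hc⟩
  · omega

lemma load_insert_le_succ {U : Finset (Fin n)} {j : Fin n} (hU : Feasible G S k U) (hj : j ∉ U)
    (o : Object V) : load G S (insert j U) o ≤ k o + 1 := by
  have := hU o
  rw [load_insert hj]
  split_ifs <;> omega

lemma exists_containsObj_of_overloaded {U : Finset (Fin n)} {j : Fin n} {p : Fin n → Prop}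
    [DecidablePred p]
    {o : Object V} (hfeas : Feasible G S k (insert j (U.filter p)))
    (ho : k o < load G S (insert j U) o) : ∃ l ∈ U, ¬ p l ∧ ContainsObj G (S l) o := by
  by_contra! h
  have hsub : (insert j U).filter (fun l => ContainsObj G (S l) o) ⊆
      (insert j (U.filter p)).filter (fun l => ContainsObj G (S l) o) := by
    intro l hl
    simp only [mem_filter, mem_insert] at hl ⊢
    rcases hl with ⟨rfl | hlU, hlo⟩
    · exact ⟨Or.inl rfl, hlo⟩
    · exact ⟨Or.inr ⟨hlU, not_not.1 fun hp => h l hlU hp hlo⟩, hlo⟩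
  exact absurd (hfeas o) (not_le.2 (ho.trans_le (card_le_card hsub)))

lemma feasible_sdiff_of_overload_le_one {U T : Finset (Fin n)}
    (hU : ∀ o, load G S U o ≤ k o + 1)
    (hT : ∀ o, k o < load G S U o → ∃ j ∈ U ∩ T, ContainsObj G (S j) o) :
    Feasible G S k (U \ T) := by
  intro o
  have hsub : (U \ T).filter (fun j => ContainsObj G (S j) o) ⊆
      U.filter (fun j => ContainsObj G (S j) o) :=
    filter_subset_filter _ sdiff_subset
  by_cases ho : k o < load G S U o
  · obtain ⟨j, hj, hjo⟩ := hT o ho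
    have hlt : load G S (U \ T) o < load G S U o := by
      refine card_lt_card ((ssubset_iff_of_subset hsub).2 ⟨j, ?_, ?_⟩)
      · exact mem_filter.2 ⟨(mem_inter.1 hj).1, hjo⟩
      · exact fun h => (mem_sdiff.1 (mem_filter.1 h).1).2 (mem_inter.1 hj).2
    have := hU o
    omega
  · exact (card_le_card hsub).trans (not_lt.1 ho)

end Load

section Exchange

variable {V : Type} {G : SimpleGraph V}

/-- Either `a` is an ancestor of `b`, and then `a = b` by the post-order, or `a` lies between
`b` and `y`. -/
lemma SimpleGraph.IsTree.mem_of_isAnc_of_pos_le (hT : G.IsTree) {t : Set V}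
    (ht : (G.induce t).Connected) {r a b y : V} (hb : b ∈ t)
    (hbmin : ∀ w ∈ t, G.dist r b ≤ G.dist r w) (hy : y ∈ t) (hay : IsAnc G r a y)
    {pos : V → ℕ} (hposinj : Function.Injective pos)
    (hpost : ∀ u v : V, IsAnc G r v u → pos u ≤ pos v) (hab : pos a ≤ pos b) : a ∈ t := by
  have hby : IsAnc G r b y := hT.isAnc_of_forall_dist_le ht hb hbmin hy
  rcases le_total (G.dist r a) (G.dist r b) with hle | hle
  · have hba : a = b := hposinj (le_antisymm hab (hpost b a (hT.isAnc_of_dist_le hay hby hle)))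
    exact hba ▸ hb
  · have hbay : IsAnc G b a y := isAnc_reroot hT.connected (hT.isAnc_of_dist_le hby hay hle) hay
    exact hT.mem_of_isAnc ht hb hy hbay

lemma SimpleGraph.IsTree.exists_subsingleton_cover_below (hT : G.IsTree) {ι : Type*}
    {T : ι → Finset V} (hTc : ∀ j, (G.induce (T j : Set V)).Connected) {J : Finset ι}
    {s : Finset V} {c : V} (ℓ : V) {P : Object V → Prop}
    (hPs : ∀ o, P o → ContainsObj G s o)
    (hcov : ∀ o, P o → ∃ j ∈ J, ContainsObj G (T j) o)
    (hroot : ∀ j ∈ J, ∀ y ∈ s, y ∈ T j → c ∈ T j) :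
    ∃ J' ⊆ J, J'.card ≤ 1 ∧ ∀ o, P o → (∀ x ∈ Object.verts o, IsAnc G c x ℓ) →
      ∃ j ∈ J', ContainsObj G (T j) o := by
  set Y := s.filter fun y =>
    ∃ o, P o ∧ (∀ x ∈ Object.verts o, IsAnc G c x ℓ) ∧ y ∈ Object.verts o
  by_cases hY : Y.Nonempty
  · obtain ⟨y, hyY, hmax⟩ := Y.exists_max_image (G.dist c) hY
    obtain ⟨hys, o₀, hP₀, hbelow₀, hy₀⟩ := mem_filter.1 hyY
    obtain ⟨j, hj, hjo₀⟩ := hcov o₀ hP₀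
    have hyj : y ∈ T j := hjo₀.verts_subset hy₀
    have hcj : c ∈ T j := hroot j hj y hys hyj
    refine ⟨{j}, singleton_subset_iff.2 hj, (card_singleton j).le, fun o hP hbelow =>
      ⟨j, mem_singleton_self j, (hPs o hP).of_verts_subset fun x hx => ?_⟩⟩
    have hxY : x ∈ Y := mem_filter.2 ⟨(hPs o hP).verts_subset hx, o, hP, hbelow, hx⟩
    exact hT.mem_of_isAnc (hTc j) hcj hyj
      (hT.isAnc_of_dist_le (hbelow x hx) (hbelow₀ y hy₀) (hmax x hxY))
  · refine ⟨∅, empty_subset J, by simp, fun o hP hbelow => absurd ?_ hY⟩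
    obtain ⟨x, hx⟩ := Object.verts_nonempty o
    exact ⟨x, mem_filter.2 ⟨(hPs o hP).verts_subset hx, o, hP, hbelow, hx⟩⟩

end Exchange

theorem statement11_general
    {V : Type} [DecidableEq V] (G : SimpleGraph V)
    (hTree : G.IsTree) (r : V)
    {n : ℕ} (S : Fin n → Finset V)
    -- each `S i` is (the vertex set of) a subtree, i.e. a connected subgraph of `G`
    (hsub : ∀ i, (G.induce (S i : Set V)).Connected)
    -- `rt i` is the vertex of the subtree `S i` closest to the root `r`
    (rt : Fin n → V) (hrtmem : ∀ i, rt i ∈ S i)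
    (hrtmin : ∀ i, ∀ v ∈ S i, G.dist r (rt i) ≤ G.dist r v)
    -- `pos` is a post-order (bottom-up) traversal of the tree ...
    (pos : V → ℕ) (hposinj : Function.Injective pos)
    (hpost : ∀ u v : V, IsAnc G r v u → pos u ≤ pos v)
    -- ... along which the roots of the subtrees appear in nondecreasing order
    (hord : ∀ i j : Fin n, i ≤ j → pos (rt i) ≤ pos (rt j))
    (k : Object V → ℕ)
    -- every subtree has at least one leaf other than its root
    (hM1 : ∀ i, 1 ≤ leavesCnt G (S i) (rt i))
    -- the hypotheses on `i` and the feasible set `Sf`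
    (i : Fin n) (Sf : Finset (Fin n))
    (hSfeas : Feasible G S k Sf)
    (hiS : i ∉ Sf)
    (hfeas2 : Feasible G S k (insert i (Sf.filter fun j => j < i))) :
    (∀ o : Object V, k o < load G S (insert i Sf) o →
        load G S Sf o = k o ∧ ContainsObj G (S i) o) ∧
    ∃ T' ⊆ Sf.filter fun j => ¬ j < i,
      T'.card ≤ leavesCnt G (S i) (rt i) ∧
      Feasible G S k ((insert i Sf) \ T') := by
  have htight := fun o (ho : k o < load G S (insert i Sf) o) =>
    tight_and_containsObj_of_overloaded hSfeas hiS ho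
  refine ⟨htight, ?_⟩
  have hcov : ∀ o, k o < load G S (insert i Sf) o →
      ∃ j ∈ Sf.filter fun j => ¬ j < i, ContainsObj G (S j) o := fun o ho => by
    obtain ⟨j, hj, hji, hjo⟩ := exists_containsObj_of_overloaded hfeas2 ho
    exact ⟨j, mem_filter.2 ⟨hj, hji⟩, hjo⟩
  have hroot : ∀ j ∈ Sf.filter fun j => ¬ j < i, ∀ y ∈ S i, y ∈ S j → rt i ∈ S j :=
    fun j hj y hyi hyj => hTree.mem_of_isAnc_of_pos_le (hsub j) (hrtmem j) (hrtmin j) hyj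
      (hTree.isAnc_of_forall_dist_le (hsub i) (hrtmem i) (hrtmin i) hyi) hposinj hpost
      (hord i j (not_lt.1 (mem_filter.1 hj).2))
  choose J hJ hJcard hJcov using fun ℓ =>
    hTree.exists_subsingleton_cover_below hsub ℓ (fun o ho => (htight o ho).2) hcov hroot
  simp only [leavesCnt_eq_card_leafSet] at hM1 ⊢
  refine ⟨(leafSet G (S i) (rt i)).biUnion J, biUnion_subset.2 fun ℓ _ => hJ ℓ, ?_, ?_⟩
  · simpa using card_biUnion_le_card_mul _ _ 1 fun ℓ _ => hJcard ℓ
  refine feasible_sdiff_of_overload_le_one (load_insert_le_succ hSfeas hiS) fun o ho => ?_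
  obtain ⟨y, hy, hdeep⟩ := hTree.exists_deepest_vert (rt i) (htight o ho).2
  obtain ⟨ℓ, hℓ, hyℓ⟩ := hTree.exists_mem_leafSet_isAnc (card_pos.1 (hM1 i))
    ((htight o ho).2.verts_subset hy)
  obtain ⟨j, hj, hjo⟩ :=
    hJcov ℓ o ho fun x hx => isAnc_trans hTree.connected (hdeep x hx) hyℓ
  exact ⟨j, mem_inter.2 ⟨mem_insert_of_mem (mem_filter.1 (hJ ℓ hj)).1,
    mem_biUnion.2 ⟨ℓ, hℓ, hj⟩⟩, hjo⟩

/-- **Lemma (exchange step).** Let `Sf` be a feasible set with `T_i ∉ Sf` such that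
`Sf ∪ {T_i}` is infeasible but `(Sf ∩ 𝒯_{i-1}) ∪ {T_i}` is feasible. Then every object
overloaded in `Sf ∪ {T_i}` is tight in `Sf` and is an object of the subtree `T_i`, and
there is a set `T' ⊆ Sf \ 𝒯_{i-1}` with `|T'| ≤ leaves(T_i)` such that
`(Sf ∪ {T_i}) \ T'` is feasible. -/
theorem statement11
    {V : Type} [Fintype V] [DecidableEq V] (G : SimpleGraph V)
    (hTree : G.IsTree) (r : V)
    {n : ℕ} (S : Fin n → Finset V)
    -- each `S i` is (the vertex set of) a subtree, i.e. a connected subgraph of `G`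
    (hsub : ∀ i, (G.induce (S i : Set V)).Connected)
    -- `rt i` is the vertex of the subtree `S i` closest to the root `r`
    (rt : Fin n → V) (hrtmem : ∀ i, rt i ∈ S i)
    (hrtmin : ∀ i, ∀ v ∈ S i, G.dist r (rt i) ≤ G.dist r v)
    -- `pos` is a post-order (bottom-up) traversal of the tree ...
    (pos : V → ℕ) (hposinj : Function.Injective pos)
    (hpost : ∀ u v : V, IsAnc G r v u → pos u ≤ pos v)
    (hcontig : ∀ u x v : V, IsAnc G r v u → pos u ≤ pos x → pos x ≤ pos v → IsAnc G r v x)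
    -- ... along which the roots of the subtrees appear in nondecreasing order
    (hord : ∀ i j : Fin n, i ≤ j → pos (rt i) ≤ pos (rt j))
    (k : Object V → ℕ)
    -- every subtree has at least one leaf other than its root
    (hM1 : ∀ i, 1 ≤ leavesCnt G (S i) (rt i))
    -- the hypotheses on `i` and the feasible set `Sf`
    (i : Fin n) (Sf : Finset (Fin n))
    (hSfeas : Feasible G S k Sf)
    (hiS : i ∉ Sf)
    (hinfeas : ¬ Feasible G S k (insert i Sf))
    (hfeas2 : Feasible G S k (insert i (Sf.filter fun j => j < i))) :
    (∀ o : Object V, k o < load G S (insert i Sf) o →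
        load G S Sf o = k o ∧ ContainsObj G (S i) o) ∧
    ∃ T' ⊆ Sf.filter fun j => ¬ j < i,
      T'.card ≤ leavesCnt G (S i) (rt i) ∧
      Feasible G S k ((insert i Sf) \ T') :=
  statement11_general G hTree r S hsub rt hrtmem hrtmin pos hposinj hpost hord k hM1 i Sf hSfeas hiS
    hfeas2
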